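/- Let K ⊆ ℝⁿ be a simplicial cone, ‖·‖ an absolute norm with respect to K, and S ⊆ π(K) a bounded semigroup containing I with ρ(S) = 1. Then v(x) := sup{‖S |x|_K‖ : S ∈ S} defines a norm on ℝⁿ which is absolute (v(x) = v(|x|_K)) and extremal for S. -/

import Mathlib

open Matrix Set
noncomputable section

variable {n : ℕ}

/-- A proper cone: convex, a cone, pointed, closed, with nonempty interior. -/
def IsProperCone (K : Set (Fin n → ℝ)) : Prop :=
  Convex ℝ K ∧ (∀ (r : ℝ), 0 < r → ∀ x ∈ K, r • x ∈ K) ∧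
    K ∩ (-K) = {0} ∧ IsClosed K ∧ (interior K).Nonempty

/-- A compact base of the cone `K`. -/
def IsCompactBase (K B : Set (Fin n → ℝ)) : Prop :=
  IsCompact B ∧ (0 : Fin n → ℝ) ∉ closure B ∧
    K = {y | ∃ r : ℝ, 0 ≤ r ∧ ∃ x ∈ B, y = r • x}

/-- A face of the cone `K`: a subcone such that `x ∈ F`, `0 ≤_K y ≤_K x` implies `y ∈ F`. -/
def IsFace (K F : Set (Fin n → ℝ)) : Prop :=
  F ⊆ K ∧ (∀ (r : ℝ), 0 < r → ∀ x ∈ F, r • x ∈ F) ∧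
    (∀ x ∈ F, ∀ y ∈ K, x - y ∈ K → y ∈ F)

/-- `A ∈ π(K)`, i.e. `A K ⊆ K`. -/
def MapsCone (A : Matrix (Fin n) (Fin n) ℝ) (K : Set (Fin n → ℝ)) : Prop :=
  ∀ x ∈ K, A.mulVec x ∈ K

/-- `A` is `K`-irreducible: `A ∈ π(K)` and `A` leaves no nontrivial face of `K` invariant. -/
def KIrreducible (K : Set (Fin n → ℝ)) (A : Matrix (Fin n) (Fin n) ℝ) : Prop :=
  MapsCone A K ∧ ∀ F : Set (Fin n → ℝ), IsFace K F → F ≠ {0} → F ≠ K →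
    ¬ (A.mulVec '' F ⊆ F)

/-- Spectral radius: the maximum modulus of complex eigenvalues of a real matrix. -/
def specRad (A : Matrix (Fin n) (Fin n) ℝ) : ℝ :=
  sSup ((fun z : ℂ => ‖z‖) '' spectrum ℂ (A.map (algebraMap ℝ ℂ)))

/-- Operator norm of a matrix induced by the reference norm on `Fin n → ℝ`. -/
def opNorm (A : Matrix (Fin n) (Fin n) ℝ) : ℝ :=
  ‖LinearMap.toContinuousLinearMap A.mulVecLin‖

/-- The set of products of `t` elements of `M` (the time-`t` evolution operators). -/
def ProdSet (M : Set (Matrix (Fin n) (Fin n) ℝ)) : ℕ → Set (Matrix (Fin n) (Fin n) ℝ)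
  | 0 => {1}
  | (t + 1) => {P | ∃ A ∈ M, ∃ Q ∈ ProdSet M t, P = A * Q}

/-- The joint spectral radius of the discrete-time semigroup generated by `M`. -/
def jsr (M : Set (Matrix (Fin n) (Fin n) ℝ)) : ℝ :=
  ⨅ t : {t : ℕ // 0 < t}, (sSup (opNorm '' ProdSet M t.1)) ^ ((t.1 : ℝ)⁻¹)

/-- `N` is a norm on `Fin n → ℝ`. -/
def IsNorm (N : (Fin n → ℝ) → ℝ) : Prop :=
  (∀ x, N x = 0 → x = 0) ∧ (∀ (c : ℝ) (x), N (c • x) = |c| * N x) ∧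
    (∀ x y, N (x + y) ≤ N x + N y)

/-- The operator norm on matrices induced by a vector norm `v`. -/
def vop (v : (Fin n → ℝ) → ℝ) (A : Matrix (Fin n) (Fin n) ℝ) : ℝ :=
  sSup ((fun x => v (A.mulVec x)) '' {x | v x ≤ 1})

/-- The joint spectral radius computed via the matrix norm `vop v`. -/
def jsrWith (v : (Fin n → ℝ) → ℝ) (M : Set (Matrix (Fin n) (Fin n) ℝ)) : ℝ :=
  ⨅ t : {t : ℕ // 0 < t}, (sSup (vop v '' ProdSet M t.1)) ^ ((t.1 : ℝ)⁻¹)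

/-- Hausdorff distance between sets of matrices w.r.t. the matrix norm `ν`. -/
def hausdorffWith (ν : Matrix (Fin n) (Fin n) ℝ → ℝ)
    (M N : Set (Matrix (Fin n) (Fin n) ℝ)) : ℝ :=
  max (sSup ((fun B => sInf ((fun A => ν (A - B)) '' M)) '' N))
      (sSup ((fun A => sInf ((fun B => ν (A - B)) '' N)) '' M))

/-- Eccentricity of a norm `v` relative to the reference norm. -/
def ecc (v : (Fin n → ℝ) → ℝ) : ℝ :=
  sSup (v '' {x : Fin n → ℝ | ‖x‖ = 1}) / sInf (v '' {x : Fin n → ℝ | ‖x‖ = 1})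

/-- `K`-absolute value w.r.t. the simplicial cone generated by the basis `b`. -/
def absK (b : Module.Basis (Fin n) ℝ (Fin n → ℝ)) (x : Fin n → ℝ) : Fin n → ℝ :=
  ∑ i, |b.repr x i| • b i

/-! An absolute norm is monotone in the moduli of the coordinates, and a matrix mapping the
cone `K` into itself satisfies `|A x|_K ≤ A |x|_K`. Hence each `x ↦ N (A |x|_K)` with `A ∈ S` is
an absolute seminorm, `N (B |A x|_K) ≤ N (B A |x|_K)` for `A, B ∈ S`, and the supremum over the
bounded semigroup `S` is an absolute norm (`I ∈ S` makes it definite) that `S` does not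
increase. -/

lemma IsNorm.map_zero {N : (Fin n → ℝ) → ℝ} (hN : IsNorm N) : N 0 = 0 := by
  simpa using hN.2.1 0 0

lemma IsNorm.nonneg {N : (Fin n → ℝ) → ℝ} (hN : IsNorm N) (x : Fin n → ℝ) : 0 ≤ N x := by
  have hneg : N (-x) = N x := by simpa using hN.2.1 (-1) x
  have := hN.2.2 x (-x)
  rw [add_neg_cancel, hN.map_zero, hneg] at this
  linarith

lemma IsNorm.exists_le_mul_norm {N : (Fin n → ℝ) → ℝ} (hN : IsNorm N) :
    ∃ L : ℝ, 0 ≤ L ∧ ∀ x : Fin n → ℝ, N x ≤ L * ‖x‖ := by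
  classical
  refine ⟨∑ i, N (Pi.single i 1), Finset.sum_nonneg fun i _ => hN.nonneg _, fun x => ?_⟩
  calc N x = N (∑ i, x i • Pi.single i 1) := by rw [← pi_eq_sum_univ']
    _ ≤ ∑ i, N (x i • Pi.single i 1) :=
        Finset.le_sum_of_subadditive N hN.map_zero.le hN.2.2 _ _
    _ = ∑ i, |x i| * N (Pi.single i 1) := Finset.sum_congr rfl fun i _ => hN.2.1 _ _
    _ ≤ ∑ i, ‖x‖ * N (Pi.single i 1) := Finset.sum_le_sum fun i _ =>
        mul_le_mul_of_nonneg_right (norm_le_pi_norm x i) (hN.nonneg _)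
    _ = (∑ i, N (Pi.single i 1)) * ‖x‖ := by rw [← Finset.mul_sum, mul_comm]

lemma norm_mulVec_le_opNorm_mul (A : Matrix (Fin n) (Fin n) ℝ) (x : Fin n → ℝ) :
    ‖A *ᵥ x‖ ≤ opNorm A * ‖x‖ :=
  (LinearMap.toContinuousLinearMap A.mulVecLin).le_opNorm x

lemma IsNorm.bddAbove_image_mulVec {N : (Fin n → ℝ) → ℝ} (hN : IsNorm N)
    {S : Set (Matrix (Fin n) (Fin n) ℝ)} (hS : ∃ C : ℝ, ∀ A ∈ S, opNorm A ≤ C) (u : Fin n → ℝ) :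
    BddAbove ((fun A => N (A *ᵥ u)) '' S) := by
  obtain ⟨C, hC⟩ := hS
  obtain ⟨L, hL₀, hL⟩ := hN.exists_le_mul_norm
  refine ⟨L * (C * ‖u‖), ?_⟩
  rintro _ ⟨A, hA, rfl⟩
  calc N (A *ᵥ u) ≤ L * ‖A *ᵥ u‖ := hL _
    _ ≤ L * (opNorm A * ‖u‖) := by gcongr; exact norm_mulVec_le_opNorm_mul A u
    _ ≤ L * (C * ‖u‖) := by gcongr; exact hC A hA

section AbsoluteMonotone

variable {ι : Type*} [DecidableEq ι] {M : (ι → ℝ) → ℝ}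
  (hadd : ∀ x y, M (x + y) ≤ M x + M y) (hsmul : ∀ (c : ℝ) x, M (c • x) = |c| * M x)
  (habs : ∀ x, M |x| = M x)
include hadd hsmul habs

lemma apply_update_mul_le (y : ι → ℝ) (j : ι) {t : ℝ} (ht : |t| ≤ 1) :
    M (Function.update y j (t * y j)) ≤ M y := by
  set y' := Function.update y j (-y j)
  have hy' : M y' = M y := by
    rw [← habs y', ← habs y]
    congr 1
    ext i
    rcases eq_or_ne i j with rfl | hij <;> simp [y', *]
  have hcomb : Function.update y j (t * y j) = ((1 + t) / 2) • y + ((1 - t) / 2) • y' := by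
    ext i
    rcases eq_or_ne i j with rfl | hij
    · simp [y']; ring
    · simp [y', hij]; ring
  obtain ⟨ht₁, ht₂⟩ := abs_le.mp ht
  calc M (Function.update y j (t * y j))
      ≤ M (((1 + t) / 2) • y) + M (((1 - t) / 2) • y') := hcomb ▸ hadd _ _
    _ = M y := by
      rw [hsmul, hsmul, hy', abs_of_nonneg (by linarith), abs_of_nonneg (by linarith)]
      ring

lemma apply_le_apply_of_abs_le [Fintype ι] {x y : ι → ℝ} (h : ∀ i, |x i| ≤ |y i|) : M x ≤ M y := by
  set t : ι → ℝ := fun i => x i / y i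
  have hx : ∀ i, t i * y i = x i := by
    intro i
    by_cases hy : y i = 0
    · simpa [hy, t, eq_comm] using h i
    · exact div_mul_cancel₀ _ hy
  have ht : ∀ i, |t i| ≤ 1 := fun i => by
    rw [abs_div]; exact div_le_one_of_le₀ (h i) (abs_nonneg _)
  have key : ∀ s : Finset ι, M (fun i => if i ∈ s then t i * y i else y i) ≤ M y := by
    intro s
    induction s using Finset.induction_on with
    | empty => simp
    | insert j s hj ih =>
      refine le_trans (le_of_eq ?_) ((apply_update_mul_le hadd hsmul habs _ j (ht j)).trans ih)
      congr 1
      ext i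
      rcases eq_or_ne i j with rfl | hij <;> simp [*]
  simpa [hx] using key Finset.univ

end AbsoluteMonotone

section SimplicialCone

variable (b : Module.Basis (Fin n) ℝ (Fin n → ℝ))

lemma repr_absK (x : Fin n → ℝ) (i : Fin n) : b.repr (absK b x) i = |b.repr x i| :=
  congrFun (b.repr_sum_self fun i => |b.repr x i|) i

lemma absK_sum_smul (c : Fin n → ℝ) : absK b (∑ i, c i • b i) = ∑ i, |c i| • b i := by
  simp only [absK, b.repr_sum_self]

lemma absK_absK (x : Fin n → ℝ) : absK b (absK b x) = absK b x := by
  rw [absK]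
  simp only [repr_absK, abs_abs]
  rfl

lemma absK_smul (c : ℝ) (x : Fin n → ℝ) : absK b (c • x) = |c| • absK b x := by
  simp [absK, Finset.smul_sum, abs_mul, mul_smul]

lemma eq_zero_of_absK_eq_zero {x : Fin n → ℝ} (hx : absK b x = 0) : x = 0 := by
  refine b.ext_elem fun i => ?_
  simpa [hx] using (repr_absK b x i).symm

lemma IsNorm.le_of_abs_repr_le {N : (Fin n → ℝ) → ℝ} (hN : IsNorm N)
    (habs : ∀ x, N x = N (absK b x)) {x y : Fin n → ℝ}
    (h : ∀ i, |b.repr x i| ≤ |b.repr y i|) : N x ≤ N y := by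
  have key := apply_le_apply_of_abs_le (M := fun c => N (∑ i, c i • b i))
    (fun c d => by
      simp only [Pi.add_apply, add_smul, Finset.sum_add_distrib]
      exact hN.2.2 _ _)
    (fun r c => by
      simp only [Pi.smul_apply, smul_eq_mul, mul_smul, ← Finset.smul_sum]
      exact hN.2.1 _ _)
    (fun c => by simp only [Pi.abs_apply, ← absK_sum_smul, ← habs])
    (x := fun i => b.repr x i) (y := fun i => b.repr y i) h
  simpa only [b.sum_repr] using key

lemma abs_repr_mulVec_le {A : Matrix (Fin n) (Fin n) ℝ}
    (hA : MapsCone A {x | ∀ i, 0 ≤ b.repr x i}) {x u : Fin n → ℝ}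
    (h : ∀ j, |b.repr x j| ≤ b.repr u j) (i : Fin n) :
    |b.repr (A *ᵥ x) i| ≤ b.repr (A *ᵥ u) i := by
  have hsub := hA (u - x) fun j => by simp; linarith [le_abs_self (b.repr x j), h j]
  have hadd := hA (u + x) fun j => by simp; linarith [neg_abs_le (b.repr x j), h j]
  simp only [mulVec_sub, mulVec_add, map_sub, map_add, mem_ofPred_eq, Finsupp.coe_sub,
    Finsupp.coe_add, Pi.sub_apply, Pi.add_apply] at hsub hadd
  exact abs_le.mpr ⟨by linarith [hadd i], by linarith [hsub i]⟩

lemma IsNorm.apply_mulVec_le {N : (Fin n → ℝ) → ℝ} (hN : IsNorm N)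
    (habs : ∀ x, N x = N (absK b x)) {A : Matrix (Fin n) (Fin n) ℝ}
    (hA : MapsCone A {x | ∀ i, 0 ≤ b.repr x i}) {x u : Fin n → ℝ}
    (h : ∀ j, |b.repr x j| ≤ b.repr u j) : N (A *ᵥ x) ≤ N (A *ᵥ u) :=
  hN.le_of_abs_repr_le b habs fun i => (abs_repr_mulVec_le b hA h i).trans (le_abs_self _)

end SimplicialCone

/-- for a simplicial cone `K` (generated by a basis `b`), an
absolute norm `N`, and a bounded semigroup `S ⊆ π(K)` with `I ∈ S`,
`v x = sup {N (S |x|_K) : S ∈ S}` is an absolute extremal norm. -/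
theorem stmt12 (b : Module.Basis (Fin n) ℝ (Fin n → ℝ))
    (K : Set (Fin n → ℝ)) (hKdef : K = {x | ∀ i, 0 ≤ b.repr x i})
    (N : (Fin n → ℝ) → ℝ) (hN : IsNorm N) (habs : ∀ x, N x = N (absK b x))
    (S : Set (Matrix (Fin n) (Fin n) ℝ))
    (hsg : ∀ A ∈ S, ∀ B ∈ S, A * B ∈ S) (hI : (1 : Matrix (Fin n) (Fin n) ℝ) ∈ S)
    (hπ : ∀ A ∈ S, MapsCone A K) (hbd : ∃ C : ℝ, ∀ A ∈ S, opNorm A ≤ C)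
    (v : (Fin n → ℝ) → ℝ)
    (hv : ∀ x, v x = sSup ((fun A => N (A.mulVec (absK b x))) '' S)) :
    IsNorm v ∧ (∀ x, v x = v (absK b x)) ∧
      ∀ A ∈ S, ∀ x, v (A.mulVec x) ≤ v x := by
  subst hKdef
  have le_v : ∀ x, ∀ A ∈ S, N (A *ᵥ absK b x) ≤ v x := fun x A hA =>
    hv x ▸ le_csSup (hN.bddAbove_image_mulVec hbd _) ⟨A, hA, rfl⟩
  have v_le : ∀ x c, (∀ A ∈ S, N (A *ᵥ absK b x) ≤ c) → v x ≤ c := fun x c h =>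
    hv x ▸ csSup_le (Set.Nonempty.image _ ⟨1, hI⟩) (by rintro _ ⟨A, hA, rfl⟩; exact h A hA)
  refine ⟨⟨fun x hx => ?_, fun c x => ?_, fun x y => ?_⟩, fun x => by rw [hv, hv, absK_absK],
    fun A hA x => ?_⟩
  · have h : N (absK b x) ≤ 0 := by simpa [hx] using le_v x 1 hI
    exact eq_zero_of_absK_eq_zero b (hN.1 _ (le_antisymm h (hN.nonneg _)))
  · simp only [hv, absK_smul, mulVec_smul, hN.2.1, abs_abs]
    rw [← smul_eq_mul, ← Real.sSup_smul_of_nonneg (abs_nonneg c), ← Set.image_smul,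
      Set.image_image]
    rfl
  · refine v_le _ _ fun A hA => ?_
    calc N (A *ᵥ absK b (x + y)) ≤ N (A *ᵥ (absK b x + absK b y)) :=
          hN.apply_mulVec_le b habs (hπ A hA) fun j => by
            simpa [repr_absK] using abs_add_le (b.repr x j) (b.repr y j)
      _ ≤ N (A *ᵥ absK b x) + N (A *ᵥ absK b y) := by rw [mulVec_add]; exact hN.2.2 _ _
      _ ≤ v x + v y := add_le_add (le_v x A hA) (le_v y A hA)
  · refine v_le _ _ fun B hB => ?_
    calc N (B *ᵥ absK b (A *ᵥ x)) ≤ N (B *ᵥ (A *ᵥ absK b x)) :=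
          hN.apply_mulVec_le b habs (hπ B hB) fun j => by
            simpa [repr_absK] using abs_repr_mulVec_le b (hπ A hA) (fun i => (repr_absK b x i).ge) j
      _ ≤ v x := by rw [mulVec_mulVec]; exact le_v x _ (hsg B hB A hA)
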